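/- In the centrality game with m = 2, if node s has exactly one node r in its two-step in-neighborhood N_s^{-2}(x), then the best response set of s is exactly { {r, v} : v ∈ V \ {s, r} }. -/

import Mathlib

/-!
The Bonacich equations `w = η + β R(x)ᵀ w` are uniquely solvable because `R(x)` is
row-substochastic and `β < 1`. If `r` is the only in-neighbour of `s` and nobody but `s`
links to `r`, the rows of `s` and `r` form a closed 2×2 system, whence
`w_s = η_s + β η_r / 2`, divided by `1 - β² / 4` exactly when `s` links back to `r`.
Thus the utility of `s` takes a larger value on the actions containing `r` and a smaller
one on all others.
-/

open Finset Matrix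

/-- Normalized adjacency matrix of the out-degree-2 graph `G(x)` where each node `i`
places out-links to the two nodes of `x i` (entries `1/2` on out-links). -/
noncomputable def R2 {V : Type*} [Fintype V] [DecidableEq V] (x : V → Finset V) :
    Matrix V V ℝ :=
  Matrix.of fun i j => if j ∈ x i then (1 : ℝ) / 2 else 0

/-- Utility of player `s` in the game `Γ(V, β, η, 2)`: its Bonacich centrality
`((1-β)(I - β R(x)ᵀ)⁻¹ η)_s` in the formed graph. -/
noncomputable def util2 {V : Type*} [Fintype V] [DecidableEq V]
    (β : ℝ) (η : V → ℝ) (x : V → Finset V) (s : V) : ℝ :=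
  ((1 - β) • ((1 - β • (R2 x)ᵀ)⁻¹).mulVec η) s

lemma det_one_sub_smul_ne_zero {n : Type*} [Fintype n] [DecidableEq n] {A : Matrix n n ℝ}
    (hA : ∀ i j, 0 ≤ A i j) (hrow : ∀ i, ∑ j, A i j ≤ 1) {β : ℝ} (hβ0 : 0 ≤ β) (hβ1 : β < 1) :
    (1 - β • A).det ≠ 0 := by
  -- Gershgorin: every row of `1 - β • A` is strictly diagonally dominant.
  refine det_ne_zero_of_sum_row_lt_diag fun k => ?_
  have hoff : ∑ j ∈ univ.erase k, ‖(1 - β • A) k j‖ = β * (∑ j, A k j - A k k) := by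
    rw [← Finset.sum_erase_add _ _ (mem_univ k), add_sub_cancel_right, Finset.mul_sum]
    refine Finset.sum_congr rfl fun j hj => ?_
    rw [Matrix.sub_apply, one_apply_ne (ne_of_mem_erase hj).symm, Matrix.smul_apply, smul_eq_mul,
      zero_sub, norm_neg, Real.norm_eq_abs, abs_of_nonneg (mul_nonneg hβ0 (hA k j))]
  have hdiag : 1 - β * A k k ≤ ‖(1 - β • A) k k‖ := by
    simpa using le_abs_self (1 - β * A k k)
  nlinarith [hrow k, hA k k]

lemma R2_nonneg {V : Type*} [Fintype V] [DecidableEq V] (x : V → Finset V) (i j : V) :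
    0 ≤ R2 x i j := by
  simp only [R2, of_apply]
  split_ifs <;> norm_num

lemma sum_R2_row {V : Type*} [Fintype V] [DecidableEq V] (x : V → Finset V) (i : V) :
    ∑ j, R2 x i j = (x i).card / 2 := by
  simp [R2, Finset.sum_ite_mem, div_eq_mul_inv]

lemma det_one_sub_smul_transpose_R2_ne_zero {V : Type*} [Fintype V] [DecidableEq V]
    {x : V → Finset V} (hx : ∀ i, (x i).card ≤ 2) {β : ℝ} (hβ0 : 0 ≤ β) (hβ1 : β < 1) :
    (1 - β • (R2 x)ᵀ).det ≠ 0 := by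
  rw [← transpose_one, ← transpose_smul, ← transpose_sub, det_transpose]
  refine det_one_sub_smul_ne_zero (R2_nonneg x) (fun i => ?_) hβ0 hβ1
  rw [sum_R2_row, div_le_one two_pos]
  exact_mod_cast hx i

lemma transpose_R2_mulVec_apply {V : Type*} [Fintype V] [DecidableEq V] (x : V → Finset V)
    (w : V → ℝ) (i : V) :
    ((R2 x)ᵀ *ᵥ w) i = ∑ j, if i ∈ x j then w j / 2 else 0 := by
  simp [mulVec, dotProduct, R2, ite_mul, div_eq_inv_mul]

lemma exists_bonacich_solution {V : Type*} [Fintype V] [DecidableEq V] {x : V → Finset V}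
    (hx : ∀ i, (x i).card ≤ 2) {β : ℝ} (hβ0 : 0 ≤ β) (hβ1 : β < 1) (η : V → ℝ) :
    ∃ w : V → ℝ, (∀ i, w i - β * ∑ j, (if i ∈ x j then w j / 2 else 0) = η i) ∧
      ∀ s, util2 β η x s = (1 - β) * w s := by
  set M : Matrix V V ℝ := 1 - β • (R2 x)ᵀ
  have hM : IsUnit M.det := (det_one_sub_smul_transpose_R2_ne_zero hx hβ0 hβ1).isUnit
  refine ⟨M⁻¹ *ᵥ η, fun i => ?_, fun s => rfl⟩
  have h := congrFun (mulVec_mulVec η M M⁻¹) i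
  rw [mul_nonsing_inv M hM, one_mulVec, sub_mulVec, one_mulVec, smul_mulVec] at h
  rwa [Pi.sub_apply, Pi.smul_apply, smul_eq_mul, transpose_R2_mulVec_apply] at h

theorem util2_eq_of_in_neighbors {V : Type*} [Fintype V] [DecidableEq V] {x : V → Finset V}
    (hx : ∀ i, (x i).card ≤ 2) {β : ℝ} (hβ0 : 0 ≤ β) (hβ1 : β < 1) (η : V → ℝ) {s r : V}
    (hs : ∀ j, s ∈ x j ↔ j = r) (hr : ∀ j, r ∈ x j → j = s) :
    util2 β η x s = (1 - β) *
      if r ∈ x s then (η s + β / 2 * η r) / (1 - β ^ 2 / 4) else η s + β / 2 * η r := by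
  obtain ⟨w, hw, hu⟩ := exists_bonacich_solution hx hβ0 hβ1 η
  have hws : w s - β * (w r / 2) = η s := by
    have h := hw s
    rwa [Fintype.sum_eq_single r fun j hj => if_neg fun h => hj ((hs j).1 h),
      if_pos ((hs r).2 rfl)] at h
  have hwr : w r - β * (if r ∈ x s then w s / 2 else 0) = η r := by
    have h := hw r
    rwa [Fintype.sum_eq_single s fun j hj => if_neg fun h => hj (hr j h)] at h
  rw [hu]
  congr 1
  split_ifs at hwr ⊢
  · have hD : 1 - β ^ 2 / 4 ≠ 0 := by nlinarith
    rw [eq_div_iff hD]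
    linear_combination hws + β / 2 * hwr
  · linear_combination hws + β / 2 * hwr

lemma setOf_isMax_eq_of_eq_ite {α : Type*} (Q P : α → Prop) [DecidablePred P] (u : α → ℝ)
    {lo hi : ℝ} (hlt : lo < hi) (hu : ∀ a, Q a → u a = if P a then hi else lo)
    (hex : ∃ a, Q a ∧ P a) :
    {a | Q a ∧ ∀ b, Q b → u b ≤ u a} = {a | Q a ∧ P a} := by
  ext a
  refine ⟨fun ⟨ha, hmax⟩ => ⟨ha, by_contra fun hPa => ?_⟩, fun ⟨ha, hPa⟩ => ⟨ha, fun b hb => ?_⟩⟩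
  · obtain ⟨b, hb, hPb⟩ := hex
    have := hmax b hb
    rw [hu a ha, hu b hb, if_pos hPb, if_neg hPa] at this
    exact this.not_gt hlt
  · rw [hu a ha, hu b hb, if_pos hPa]
    split_ifs
    exacts [le_rfl, hlt.le]

def twoStepInNeighbors {V : Type*} (x : V → Finset V) (s : V) : Set V :=
  {i | i ≠ s ∧ (s ∈ x i ∨ ∃ t, s ∈ x t ∧ t ∈ x i)}

lemma in_neighbors_update_of_twoStepInNeighbors_eq_singleton {V : Type*} [DecidableEq V]
    {x : V → Finset V} (hirr : ∀ i, i ∉ x i) {s r : V} (hN : twoStepInNeighbors x s = {r})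
    {a : Finset V} (has : s ∉ a) :
    (∀ j, s ∈ Function.update x s a j ↔ j = r) ∧
      ∀ j, r ∈ Function.update x s a j → j = s := by
  have hmem (i : V) : (i ≠ s ∧ (s ∈ x i ∨ ∃ t, s ∈ x t ∧ t ∈ x i)) ↔ i = r :=
    Set.ext_iff.1 hN i
  obtain ⟨hrs, hsr⟩ : r ≠ s ∧ s ∈ x r := by
    obtain ⟨hrs, hsr | ⟨t, hst, -⟩⟩ := (hmem r).2 rfl
    · exact ⟨hrs, hsr⟩
    · have hts : t ≠ s := by rintro rfl; exact hirr t hst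
      exact ⟨hrs, (hmem t).1 ⟨hts, Or.inl hst⟩ ▸ hst⟩
  refine ⟨(Function.forall_update_iff x fun j b => s ∈ b ↔ j = r).2
    ⟨iff_of_false has hrs.symm, fun j hjs => ⟨fun h => (hmem j).1 ⟨hjs, Or.inl h⟩, ?_⟩⟩,
    (Function.forall_update_iff x fun j b => r ∈ b → j = s).2 ⟨fun _ => rfl, fun j hjs h => ?_⟩⟩
  · rintro rfl; exact hsr
  · obtain rfl | hjr := eq_or_ne j r
    · exact absurd h (hirr j)
    · exact absurd ((hmem j).1 ⟨hjs, Or.inr ⟨r, hsr, h⟩⟩) hjr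

lemma exists_pair_mem_of_card_eq_two {V : Type*} [DecidableEq V] {c : Finset V}
    (hc : c.card = 2) {s r : V} (hsc : s ∉ c) (hrs : r ≠ s) :
    ∃ a : Finset V, (a.card = 2 ∧ s ∉ a) ∧ r ∈ a := by
  obtain ⟨v, hvc, hvr⟩ := exists_mem_ne (hc ▸ one_lt_two) r
  have hvs : v ≠ s := by rintro rfl; exact hsc hvc
  refine ⟨{r, v}, ⟨card_pair hvr.symm, ?_⟩, mem_insert_self r {v}⟩
  simp [hrs.symm, hvs.symm]

theorem best_response_single_two_step_in_neighbor_m2_general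
    {V : Type*} [Fintype V] [DecidableEq V]
    (β : ℝ) (hβ0 : 0 < β) (hβ1 : β < 1)
    (η : V → ℝ) (hη : ∀ i, 0 < η i)
    (x : V → Finset V) (hx : ∀ i, (x i).card = 2 ∧ i ∉ x i)
    (s r : V)
    (hN : {i : V | i ≠ s ∧ (s ∈ x i ∨ ∃ t, s ∈ x t ∧ t ∈ x i)} = {r}) :
    {a : Finset V | a.card = 2 ∧ s ∉ a ∧ ∀ b : Finset V, b.card = 2 → s ∉ b →
        util2 β η (Function.update x s b) s ≤ util2 β η (Function.update x s a) s}
      = {a : Finset V | a.card = 2 ∧ s ∉ a ∧ r ∈ a} := by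
  set A := η s + β / 2 * η r
  have hlt : (1 - β) * A < (1 - β) * (A / (1 - β ^ 2 / 4)) := by
    have hA : 0 < A := by have := hη s; have := hη r; positivity
    refine mul_lt_mul_of_pos_left ?_ (sub_pos.2 hβ1)
    rw [lt_div_iff₀ (by nlinarith)]
    nlinarith [mul_pos hA (pow_pos hβ0 2)]
  have hu (a : Finset V) (ha : a.card = 2 ∧ s ∉ a) : util2 β η (Function.update x s a) s =
      if r ∈ a then (1 - β) * (A / (1 - β ^ 2 / 4)) else (1 - β) * A := by
    obtain ⟨hs, hr⟩ :=
      in_neighbors_update_of_twoStepInNeighbors_eq_singleton (fun i => (hx i).2) hN ha.2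
    have hcard : ∀ i, (Function.update x s a i).card ≤ 2 :=
      (Function.forall_update_iff x fun _ (b : Finset V) => b.card ≤ 2).2
        ⟨ha.1.le, fun i _ => (hx i).1.le⟩
    rw [util2_eq_of_in_neighbors hcard hβ0.le hβ1 η hs hr, Function.update_self, mul_ite]
  have hrs : r ≠ s := (hN.ge (Set.mem_singleton r)).1
  simpa only [and_assoc, and_imp] using
    setOf_isMax_eq_of_eq_ite (fun a : Finset V => a.card = 2 ∧ s ∉ a) (r ∈ ·) _ hlt hu (exists_pair_mem_of_card_eq_two (hx s).1 (hx s).2 hrs)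

/-- in `Γ(V,β,η,2)`, if the two-step in-neighborhood of `s` is exactly
`{r}`, then the best response set of `s` is exactly the set of pairs `{r, v}` with
`v ∈ V \ {s, r}`, i.e. the valid actions containing `r`. -/
theorem best_response_single_two_step_in_neighbor_m2
    {V : Type*} [Fintype V] [DecidableEq V]
    (β : ℝ) (hβ0 : 0 < β) (hβ1 : β < 1)
    (η : V → ℝ) (hη : ∀ i, 0 < η i) (hηsum : ∑ i, η i = 1)
    (x : V → Finset V) (hx : ∀ i, (x i).card = 2 ∧ i ∉ x i)
    (s r : V)
    (hN : {i : V | i ≠ s ∧ (s ∈ x i ∨ ∃ t, s ∈ x t ∧ t ∈ x i)} = {r}) :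
    {a : Finset V | a.card = 2 ∧ s ∉ a ∧ ∀ b : Finset V, b.card = 2 → s ∉ b →
        util2 β η (Function.update x s b) s ≤ util2 β η (Function.update x s a) s}
      = {a : Finset V | a.card = 2 ∧ s ∉ a ∧ r ∈ a} :=
  best_response_single_two_step_in_neighbor_m2_general β hβ0 hβ1 η hη x hx s r hN
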